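/- A preference function of span 0, i.e. a fixed permutation (P_1,...,P_t) of the alphabet A = {0,...,t-1} used after every symbol, generates a full de Bruijn sequence of every order n ≥ 1 from initial word 0^n if and only if P_t = 0. -/
import Mathlib


namespace DeBruijnPaper

/-- The word (block) of length `n` starting at position `i` of the sequence `a`. -/
def wordAt {t : ℕ} (a : ℕ → Fin t) (n i : ℕ) : Fin n → Fin t :=
  fun j => a (i + (j : ℕ))

/-- `w` has appeared as a block entirely within the first `k` symbols of `a`. -/
def Seen {t : ℕ} (a : ℕ → Fin t) (n k : ℕ) (w : Fin n → Fin t) : Prop :=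
  ∃ p, p + n ≤ k ∧ wordAt a n p = w

/-- The candidate `n`-word whose last symbol (at position `k`) is replaced by `c`,
preceded by the `n-1` symbols `a (k-(n-1)), …, a (k-1)`. -/
def cand {t : ℕ} (a : ℕ → Fin t) (n k : ℕ) (c : Fin t) : Fin n → Fin t :=
  fun j => if (j : ℕ) + 1 = n then c else a (k - (n - 1) + (j : ℕ))

/-- `P` is a preference function of span `m`: to each word of length `m` it assigns a
priority listing of the alphabet, i.e. `P w : Fin t → Fin t` is a bijection,
`P w i` being the `i`-th preferred symbol after the word `w`. -/
def IsPrefFun (t m : ℕ) (P : (Fin m → Fin t) → Fin t → Fin t) : Prop :=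
  ∀ w, Function.Bijective (P w)

/-- The sequence `a` (of length `L`) is produced by the greedy Algorithm P for the
preference function `P` of span `m`, at order `n`, from the initial word `I`:
it starts with `I`, every `n`-word occurs at most once, each appended symbol is the
highest-priority symbol (priorities determined by the last `m` symbols) forming a
new `n`-word, and the sequence is maximal (cannot be extended). -/
structure GenSeqFrom (t m n : ℕ) (I : Fin n → Fin t)
    (P : (Fin m → Fin t) → Fin t → Fin t) (a : ℕ → Fin t) (L : ℕ) : Prop where
  len_ge : n ≤ L
  init : ∀ j : Fin n, a (j : ℕ) = I j
  inj : ∀ i j, i + n ≤ L → j + n ≤ L → wordAt a n i = wordAt a n j → i = j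
  greedy : ∀ k, n ≤ k → k < L → ∃ i : Fin t,
    a k = P (wordAt a m (k - m)) i ∧
    ∀ j : Fin t, j < i → Seen a n k (cand a n k (P (wordAt a m (k - m)) j))
  maximal : ∀ c : Fin t, Seen a n L (cand a n L c)

/-- The sequence `a` of length `L` contains every `n`-word over the alphabet. -/
def Full (t n : ℕ) (a : ℕ → Fin t) (L : ℕ) : Prop :=
  ∀ w : Fin n → Fin t, ∃ p, p + n ≤ L ∧ wordAt a n p = w

/-- The all-zero word `0^n`. -/
def zeroWord (t n : ℕ) [NeZero t] : Fin n → Fin t := fun _ => 0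

/-- The least preference function induced by `P`:
`g(a_1,…,a_m) = (a_2,…,a_m, P_t(a_1,…,a_m))`. -/
def leastPF {t m : ℕ} (ht : 0 < t) (P : (Fin m → Fin t) → Fin t → Fin t)
    (w : Fin m → Fin t) : Fin m → Fin t :=
  fun j => if h : (j : ℕ) + 1 = m then P w ⟨t - 1, Nat.sub_lt ht Nat.one_pos⟩
           else w ⟨(j : ℕ) + 1, by have := j.isLt; omega⟩

/-- `g` has no cycles of any length other than the self-loop at the all-zero word. -/
def OnlyZeroCycle {t m : ℕ} [NeZero t] (g : (Fin m → Fin t) → Fin m → Fin t) : Prop :=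
  g (fun _ => 0) = (fun _ => 0) ∧
  ∀ (x : Fin m → Fin t) (l : ℕ), 0 < l → g^[l] x = x → x = fun _ => 0

/-- Extend a finite sequence by zeros to a sequence indexed by `ℕ`. -/
def ext {t L : ℕ} [NeZero t] (S : Fin L → Fin t) : ℕ → Fin t :=
  fun i => if h : i < L then S ⟨i, h⟩ else 0

/- ### machinery -/

section Machinery
set_option linter.unusedSectionVars false

variable {t : ℕ} [NeZero t] {n L : ℕ} {a : ℕ → Fin t}
  {P : (Fin 0 → Fin t) → Fin t → Fin t}

lemma tpos : 0 < t := Nat.pos_of_ne_zero (NeZero.ne t)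

lemma P_const (P : (Fin 0 → Fin t) → Fin t → Fin t) (w : Fin 0 → Fin t) :
    P w = P (fun j : Fin 0 => j.elim0) := by
  exact congrArg P (funext fun j => j.elim0)

/-- n-window at some position `p < L` carries the ℕ-indexed word `v`. -/
def Pres (a : ℕ → Fin t) (n L : ℕ) (v : ℕ → Fin t) : Prop :=
  ∃ p, p + n ≤ L ∧ ∀ j, j < n → a (p + j) = v j

lemma seen_cand_elim (hn : 1 ≤ n) {k : ℕ} (hk : n ≤ k) {c : Fin t}
    (h : Seen a n k (cand a n k c)) :
    ∃ q, q + n ≤ k ∧ (∀ j, j + 1 < n → a (q + j) = a (k - n + 1 + j)) ∧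
      a (q + (n - 1)) = c := by
  obtain ⟨q, hq, hw⟩ := h
  refine ⟨q, hq, ?_, ?_⟩
  · intro j hj
    have h1 := congrFun hw ⟨j, by omega⟩
    simp only [wordAt, cand] at h1
    rw [if_neg (by omega)] at h1
    rw [h1]; congr 1; omega
  · have h1 := congrFun hw ⟨n - 1, by omega⟩
    simp only [wordAt, cand] at h1
    rwa [if_pos (by omega)] at h1

lemma init' (hG : GenSeqFrom t 0 n (zeroWord t n) P a L) : ∀ j, j < n → a j = 0 := by
  intro j hj
  have := hG.init ⟨j, hj⟩
  simpa [zeroWord] using this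

lemma inj' (hG : GenSeqFrom t 0 n (zeroWord t n) P a L) :
    ∀ p q, p + n ≤ L → q + n ≤ L → (∀ j, j < n → a (p + j) = a (q + j)) → p = q := by
  intro p q hp hq h
  refine hG.inj p q hp hq ?_
  funext j
  exact h j j.isLt

lemma maximal' (hG : GenSeqFrom t 0 n (zeroWord t n) P a L) (hn : 1 ≤ n) (c : Fin t) :
    ∃ q, q + n ≤ L ∧ (∀ j, j + 1 < n → a (q + j) = a (L - n + 1 + j)) ∧
      a (q + (n - 1)) = c :=
  seen_cand_elim hn hG.len_ge (hG.maximal c)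

lemma greedy' (hG : GenSeqFrom t 0 n (zeroWord t n) P a L) (hn : 1 ≤ n) {k : ℕ}
    (hk1 : n ≤ k) (hk2 : k < L) :
    ∃ i : Fin t, a k = P (fun j => j.elim0) i ∧
      ∀ j : Fin t, j < i → ∃ q, q + n ≤ k ∧
        (∀ j', j' + 1 < n → a (q + j') = a (k - n + 1 + j')) ∧
        a (q + (n - 1)) = P (fun j => j.elim0) j := by
  obtain ⟨i, hi, hj⟩ := hG.greedy k hk1 hk2
  rw [P_const P (wordAt a 0 (k - 0))] at hi hj
  exact ⟨i, hi, fun j hji => seen_cand_elim hn hk1 (hj j hji)⟩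


open Classical in
noncomputable def outS (a : ℕ → Fin t) (n L : ℕ) (v : ℕ → Fin t) : Finset ℕ :=
  (Finset.range (L - n + 1)).filter fun p => ∀ j, j + 1 < n → a (p + j) = v j

open Classical in
noncomputable def inS (a : ℕ → Fin t) (n L : ℕ) (v : ℕ → Fin t) : Finset ℕ :=
  (Finset.Icc 1 (L - n + 1)).filter fun q => ∀ j, j + 1 < n → a (q + j) = v j

lemma mem_outS (hL : n ≤ L) {v : ℕ → Fin t} {p : ℕ} :
    p ∈ outS a n L v ↔ p + n ≤ L ∧ ∀ j, j + 1 < n → a (p + j) = v j := by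
  classical
  unfold outS
  rw [Finset.mem_filter, Finset.mem_range]
  constructor
  · rintro ⟨h1, h2⟩; exact ⟨by omega, h2⟩
  · rintro ⟨h1, h2⟩; exact ⟨by omega, h2⟩

lemma mem_inS (hL : n ≤ L) {v : ℕ → Fin t} {q : ℕ} :
    q ∈ inS a n L v ↔ (1 ≤ q ∧ q + n ≤ L + 1) ∧ ∀ j, j + 1 < n → a (q + j) = v j := by
  classical
  unfold inS
  rw [Finset.mem_filter, Finset.mem_Icc]
  constructor
  · rintro ⟨h1, h2⟩; exact ⟨by omega, h2⟩
  · rintro ⟨h1, h2⟩; exact ⟨by omega, h2⟩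

lemma card_outS_le (hG : GenSeqFrom t 0 n (zeroWord t n) P a L) (hn : 1 ≤ n)
    (v : ℕ → Fin t) : (outS a n L v).card ≤ t := by
  have h := Finset.card_le_card_of_injOn (s := outS a n L v)
    (t := (Finset.univ : Finset (Fin t))) (fun p => a (p + (n - 1)))
    (fun p _ => Finset.mem_univ _) ?_
  · simpa using h
  · intro p hp q hq hpq
    rw [Finset.mem_coe, mem_outS hG.len_ge] at hp hq
    refine inj' hG p q hp.1 hq.1 ?_
    intro j hj
    rcases Nat.lt_or_ge (j + 1) n with h1 | h1
    · rw [hp.2 j h1, hq.2 j h1]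
    · have : j = n - 1 := by omega
      subst this
      exact hpq

lemma card_inS_le_of (hG : GenSeqFrom t 0 n (zeroWord t n) P a L) (hn : 1 ≤ n)
    {v : ℕ → Fin t} {s : Finset (Fin t)} (hmaps : ∀ q ∈ inS a n L v, a (q - 1) ∈ s) :
    (inS a n L v).card ≤ s.card := by
  refine Finset.card_le_card_of_injOn (fun q => a (q - 1)) hmaps ?_
  intro p hp q hq hpq
  rw [Finset.mem_coe, mem_inS hG.len_ge] at hp hq
  have := inj' hG (p - 1) (q - 1) (by omega) (by omega) ?_
  · omega
  · intro j hj
    rcases Nat.eq_zero_or_pos j with rfl | hjpos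
    · simpa using hpq
    · have e1 : p - 1 + j = p + (j - 1) := by omega
      have e2 : q - 1 + j = q + (j - 1) := by omega
      rw [e1, e2, hp.2 (j - 1) (by omega), hq.2 (j - 1) (by omega)]

lemma card_inS_le (hG : GenSeqFrom t 0 n (zeroWord t n) P a L) (hn : 1 ≤ n)
    (v : ℕ → Fin t) : (inS a n L v).card ≤ t := by
  have h := card_inS_le_of hG hn (v := v) (s := (Finset.univ : Finset (Fin t)))
    (fun q _ => Finset.mem_univ _)
  simpa using h

lemma card_outS_suffix (hG : GenSeqFrom t 0 n (zeroWord t n) P a L) (hn : 1 ≤ n) :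
    t ≤ (outS a n L (fun j => a (L - n + 1 + j))).card := by
  have h := Finset.card_le_card_of_surjOn (s := outS a n L (fun j => a (L - n + 1 + j)))
    (t := (Finset.univ : Finset (Fin t))) (fun p => a (p + (n - 1))) ?_
  · simpa using h
  · intro c _
    obtain ⟨q, hq, hmatch, hlabel⟩ := maximal' hG hn c
    exact ⟨q, (mem_outS hG.len_ge).mpr ⟨hq, hmatch⟩, hlabel⟩

lemma erase_out_in (hL : n ≤ L) (v : ℕ → Fin t) :
    (outS a n L v).erase 0 = (inS a n L v).erase (L - n + 1) := by
  ext p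
  rw [Finset.mem_erase, Finset.mem_erase, mem_outS hL, mem_inS hL]
  constructor
  · rintro ⟨h0, h1, h2⟩; exact ⟨by omega, ⟨by omega, h2⟩⟩
  · rintro ⟨h0, h1, h2⟩; exact ⟨by omega, by omega, h2⟩

lemma suffix_zero (hG : GenSeqFrom t 0 n (zeroWord t n) P a L) (hn : 1 ≤ n) :
    ∀ j, j + 1 < n → a (L - n + 1 + j) = 0 := by
  have hout := card_outS_suffix hG hn
  have hin := card_inS_le hG hn (fun j => a (L - n + 1 + j))
  have hmem : L - n + 1 ∈ inS a n L (fun j => a (L - n + 1 + j)) := by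
    rw [mem_inS hG.len_ge]
    have := hG.len_ge
    exact ⟨⟨by omega, by omega⟩, fun j hj => rfl⟩
  have herase := erase_out_in (a := a) hG.len_ge (fun j => a (L - n + 1 + j))
  have h0 : 0 ∈ outS a n L (fun j => a (L - n + 1 + j)) := by
    by_contra h0
    rw [Finset.erase_eq_of_notMem h0] at herase
    have hc := congrArg Finset.card herase
    rw [Finset.card_erase_of_mem hmem] at hc
    have := @tpos t _
    omega
  intro j hj
  have h1 := ((mem_outS hG.len_ge).mp h0).2 j hj
  rw [zero_add] at h1
  rw [← h1, init' hG j (by omega)]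

lemma card_balance (hG : GenSeqFrom t 0 n (zeroWord t n) P a L) (hn : 1 ≤ n)
    (v : ℕ → Fin t) : (outS a n L v).card = (inS a n L v).card := by
  have hsz := suffix_zero hG hn
  have key : (0 ∈ outS a n L v) ↔ (L - n + 1 ∈ inS a n L v) := by
    rw [mem_outS hG.len_ge, mem_inS hG.len_ge]
    have := hG.len_ge
    constructor
    · rintro ⟨-, h⟩
      refine ⟨⟨by omega, by omega⟩, fun j hj => ?_⟩
      rw [hsz j hj, ← h j hj, zero_add, init' hG j (by omega)]
    · rintro ⟨-, h⟩
      refine ⟨by omega, fun j hj => ?_⟩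
      rw [zero_add, init' hG j (by omega), ← h j hj, hsz j hj]
  have herase := erase_out_in (a := a) hG.len_ge v
  by_cases h0 : 0 ∈ outS a n L v
  · have h1 := key.mp h0
    have hc := congrArg Finset.card herase
    rw [Finset.card_erase_of_mem h0, Finset.card_erase_of_mem h1] at hc
    have c1 : 0 < (outS a n L v).card := Finset.card_pos.mpr ⟨0, h0⟩
    have c2 : 0 < (inS a n L v).card := Finset.card_pos.mpr ⟨_, h1⟩
    omega
  · rw [Finset.erase_eq_of_notMem h0,
      Finset.erase_eq_of_notMem (fun h => h0 (key.mpr h))] at herase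
    rw [herase]


lemma lemA (hG : GenSeqFrom t 0 n (zeroWord t n) P a L) (hP : IsPrefFun t 0 P)
    (hn : 1 ≤ n) (hQt : P (fun j => j.elim0) ⟨t - 1, by have := @tpos t _; omega⟩ = 0)
    {v : ℕ → Fin t} (hv : Pres a n L v) (hv0 : v (n - 1) = 0) (c : Fin t) :
    Pres a n L (fun j => if j = n - 1 then c else v j) := by
  obtain ⟨p, hp, hw⟩ := hv
  rcases Nat.eq_zero_or_pos p with rfl | hppos
  · obtain ⟨q, hq, hmatch, hlabel⟩ := maximal' hG hn c
    refine ⟨q, hq, fun j hj => ?_⟩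
    show a (q + j) = if j = n - 1 then c else v j
    rcases Nat.lt_or_ge (j + 1) n with h | h
    · have h1 : v j = 0 := by
        rw [← hw j (by omega), zero_add, init' hG j (by omega)]
      rw [if_neg (by omega), h1, hmatch j h, suffix_zero hG hn j h]
    · have hj' : j = n - 1 := by omega
      subst hj'
      rw [if_pos rfl]
      exact hlabel
  · have hkn : n ≤ p + n - 1 := by omega
    have hkL : p + n - 1 < L := by omega
    obtain ⟨i, hi, hji⟩ := greedy' hG hn hkn hkL
    have hak : a (p + n - 1) = 0 := by
      have h1 := hw (n - 1) (by omega)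
      rw [hv0] at h1
      rw [show p + n - 1 = p + (n - 1) by omega]
      exact h1
    have hit : i = ⟨t - 1, by have := @tpos t _; omega⟩ := by
      apply (hP (fun j => j.elim0)).1
      rw [← hi, hQt, hak]
    obtain ⟨jc, hjc⟩ := (hP (fun j => j.elim0)).2 c
    by_cases hje : (jc : ℕ) = t - 1
    · have hc0 : c = 0 := by
        rw [← hjc, show jc = (⟨t - 1, by have := @tpos t _; omega⟩ : Fin t) from Fin.ext hje, hQt]
      refine ⟨p, hp, fun j hj => ?_⟩
      show a (p + j) = if j = n - 1 then c else v j
      rcases Nat.lt_or_ge (j + 1) n with h | h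
      · rw [if_neg (by omega)]
        exact hw j (by omega)
      · have hj' : j = n - 1 := by omega
        subst hj'
        rw [if_pos rfl, hc0, show p + (n - 1) = p + n - 1 by omega]
        exact hak
    · have hjlt : jc < i := by
        rw [hit]
        exact Fin.lt_def.mpr (by have := jc.isLt; simp; omega)
      obtain ⟨q, hqn, hqm, hqlab⟩ := hji jc hjlt
      refine ⟨q, by omega, fun j hj => ?_⟩
      show a (q + j) = if j = n - 1 then c else v j
      rcases Nat.lt_or_ge (j + 1) n with h | h
      · rw [if_neg (by omega), hqm j h, show p + n - 1 - n + 1 = p by omega]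
        exact hw j (by omega)
      · have hj' : j = n - 1 := by omega
        subst hj'
        rw [if_pos rfl, hqlab, hjc]

lemma lemB (hG : GenSeqFrom t 0 n (zeroWord t n) P a L) (hn : 1 ≤ n)
    {v : ℕ → Fin t} (hv : ¬ Pres a n L v) (hv0 : v (n - 1) = 0) :
    ∃ d, ¬ Pres a n L (fun j => if j = n - 1 then d else v (j + 1)) := by
  by_contra hcon
  push_neg at hcon
  set v' : ℕ → Fin t := fun j => v (j + 1) with hv'
  have hinle : (inS a n L v').card ≤ (Finset.univ.erase (v 0)).card := by
    refine card_inS_le_of hG hn ?_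
    intro q hq
    rw [mem_inS hG.len_ge] at hq
    rw [Finset.mem_erase]
    refine ⟨fun hvq => hv ⟨q - 1, by omega, fun j hj => ?_⟩, Finset.mem_univ _⟩
    rcases Nat.eq_zero_or_pos j with rfl | hjpos
    · simpa using hvq
    · rw [show q - 1 + j = q + (j - 1) by omega, hq.2 (j - 1) (by omega)]
      show v (j - 1 + 1) = v j
      congr 1
      omega
  have hout : t ≤ (outS a n L v').card := by
    have h := Finset.card_le_card_of_surjOn (s := outS a n L v')
      (t := (Finset.univ : Finset (Fin t))) (fun p => a (p + (n - 1))) ?_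
    · simpa using h
    · intro d _
      obtain ⟨p, hp, hw⟩ := hcon d
      have hw' : ∀ j, j < n → a (p + j) = if j = n - 1 then d else v (j + 1) := hw
      refine ⟨p, ?_, ?_⟩
      · rw [Finset.mem_coe, mem_outS hG.len_ge]
        refine ⟨hp, fun j hj => ?_⟩
        show a (p + j) = v (j + 1)
        rw [hw' j (by omega), if_neg (by omega)]
      · show a (p + (n - 1)) = d
        rw [hw' (n - 1) (by omega), if_pos rfl]
  have hbal := card_balance hG hn v'
  have hcard : (Finset.univ.erase (v 0)).card = t - 1 := by
    rw [Finset.card_erase_of_mem (Finset.mem_univ _)]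
    simp
  have := @tpos t _
  omega

lemma pres_full (hG : GenSeqFrom t 0 n (zeroWord t n) P a L) (hP : IsPrefFun t 0 P)
    (hn : 1 ≤ n) (hQt : P (fun j => j.elim0) ⟨t - 1, by have := @tpos t _; omega⟩ = 0) :
    ∀ v : ℕ → Fin t, Pres a n L v := by
  have hL := hG.len_ge
  have presZero : ∀ u : ℕ → Fin t, (∀ i, i < n → u i = 0) → Pres a n L u :=
    fun u hu => ⟨0, by omega, fun i hi => by rw [zero_add, init' hG i hi, hu i hi]⟩
  intro v
  by_contra hv
  have main : ∀ j, ∃ u, ¬ Pres a n L u ∧ ∀ i, i < n → n ≤ i + j → u i = 0 := by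
    intro j
    induction j with
    | zero => exact ⟨v, hv, fun i hi hni => absurd hni (by omega)⟩
    | succ j ih =>
      obtain ⟨u, hu, hz⟩ := ih
      by_cases hnj : n ≤ j
      · exact absurd (presZero u (fun i hi => hz i hi (by omega))) hu
      rcases Nat.eq_zero_or_pos j with rfl | hjpos
      · refine ⟨fun i => if i = n - 1 then 0 else u i, fun hP0 => ?_, fun i hi hni => ?_⟩
        · have hA := lemA hG hP hn hQt hP0 (by simp) (u (n - 1))
          apply hu
          obtain ⟨p, hp, hw⟩ := hA
          refine ⟨p, hp, fun i hi => ?_⟩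
          rw [hw i hi]
          by_cases h : i = n - 1 <;> simp [h]
        · have h : i = n - 1 := by omega
          simp [h]
      · have hu0 : u (n - 1) = 0 := hz (n - 1) (by omega) (by omega)
        obtain ⟨d, hd⟩ := lemB hG hn hu hu0
        refine ⟨fun i => if i = n - 1 then 0
            else (fun i' => if i' = n - 1 then d else u (i' + 1)) i,
            fun hP0 => ?_, fun i hi hni => ?_⟩
        · have hA := lemA hG hP hn hQt hP0 (by simp) d
          apply hd
          obtain ⟨p, hp, hw⟩ := hA
          refine ⟨p, hp, fun i hi => ?_⟩
          rw [hw i hi]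
          by_cases h : i = n - 1 <;> simp [h]
        · by_cases h : i = n - 1
          · simp [h]
          · simp only [h, if_false]
            exact hz (i + 1) (by omega) (by omega)
  obtain ⟨u, hu, hz⟩ := main n
  exact hu (presZero u (fun i hi => hz i hi (by omega)))

lemma full_of (hG : GenSeqFrom t 0 n (zeroWord t n) P a L) (hP : IsPrefFun t 0 P)
    (hn : 1 ≤ n) (hQt : P (fun j => j.elim0) ⟨t - 1, by have := @tpos t _; omega⟩ = 0) :
    Full t n a L := by
  intro w
  obtain ⟨p, hp, hw⟩ := pres_full hG hP hn hQt (fun j => if h : j < n then w ⟨j, h⟩ else 0)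
  refine ⟨p, hp, funext fun j => ?_⟩
  have h1 : a (p + (j : ℕ)) = if h : (j : ℕ) < n then w ⟨j, h⟩ else 0 := hw (j : ℕ) j.isLt
  rw [dif_pos j.isLt] at h1
  simpa [wordAt] using h1


lemma forward (hG : GenSeqFrom t 0 n (zeroWord t n) P a L) (hP : IsPrefFun t 0 P)
    (hn2 : 2 ≤ n) (hF : Full t n a L) :
    P (fun j => j.elim0) ⟨t - 1, by have := @tpos t _; omega⟩ = 0 := by
  by_contra hc
  set c := P (fun j => j.elim0) ⟨t - 1, by have := @tpos t _; omega⟩ with hcdef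
  have hn : 1 ≤ n := by omega
  have hL := hG.len_ge
  have hsz := suffix_zero hG hn
  obtain ⟨p, hp, hw⟩ := hF (fun j => if (j : ℕ) + 1 = n then c else a (L - n + (j : ℕ)))
  have hlab : a (p + (n - 1)) = c := by
    have h1 : a (p + ((⟨n - 1, by omega⟩ : Fin n) : ℕ)) =
        if ((⟨n - 1, by omega⟩ : Fin n) : ℕ) + 1 = n then c
        else a (L - n + ((⟨n - 1, by omega⟩ : Fin n) : ℕ)) := congrFun hw ⟨n - 1, by omega⟩
    rwa [if_pos (by simp; omega)] at h1
  have hpre : ∀ j, j + 1 < n → a (p + j) = a (L - n + j) := by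
    intro j hj
    have h1 : a (p + ((⟨j, by omega⟩ : Fin n) : ℕ)) =
        if ((⟨j, by omega⟩ : Fin n) : ℕ) + 1 = n then c
        else a (L - n + ((⟨j, by omega⟩ : Fin n) : ℕ)) := congrFun hw ⟨j, by omega⟩
    rwa [if_neg (by simp; omega)] at h1
  have hppos : 1 ≤ p := by
    rcases Nat.eq_zero_or_pos p with rfl | h
    · exfalso
      apply hc
      rw [← hlab, zero_add, init' hG (n - 1) (by omega)]
    · exact h
  rcases eq_or_lt_of_le (show p ≤ L - n by omega) with heq | hlt
  · apply hc
    have h1 : a (L - n + 1 + (n - 2)) = 0 := hsz (n - 2) (by omega)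
    have h2 : p + (n - 1) = L - n + 1 + (n - 2) := by omega
    rw [← hlab, h2, h1]
  · obtain ⟨i, hi, hji⟩ := greedy' hG hn (show n ≤ p + n - 1 by omega)
      (show p + n - 1 < L by omega)
    have hit : i = ⟨t - 1, by have := @tpos t _; omega⟩ := by
      apply (hP (fun j => j.elim0)).1
      rw [← hi, ← hcdef, show p + n - 1 = p + (n - 1) by omega, hlab]
    obtain ⟨j₀, hj₀⟩ := (hP (fun j => j.elim0)).2 0
    have hj₀lt : j₀ < i := by
      rw [hit]
      refine Fin.lt_def.mpr ?_
      have h1 : (j₀ : ℕ) ≠ t - 1 := by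
        intro h
        apply hc
        rw [hcdef, show (⟨t - 1, by have := @tpos t _; omega⟩ : Fin t) = j₀ from (Fin.ext h).symm, hj₀]
      have := j₀.isLt
      simp
      omega
    obtain ⟨q, hqn, hqm, hqlab⟩ := hji j₀ hj₀lt
    have heq := hG.inj q (L - n) (by omega) (by omega) ?_
    · omega
    · funext j
      show a (q + (j : ℕ)) = a (L - n + (j : ℕ))
      rcases Nat.lt_or_ge ((j : ℕ) + 1) n with hj | hj
      · rw [hqm (j : ℕ) hj, show p + n - 1 - n + 1 = p by omega]
        exact hpre (j : ℕ) hj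
      · have hj' : (j : ℕ) = n - 1 := by have := j.isLt; omega
        rw [hj', hqlab, hj₀]
        have h1 : L - n + (n - 1) = L - n + 1 + (n - 2) := by omega
        rw [h1, hsz (n - 2) (by omega)]

end Machinery

section Construction

variable {t : ℕ} [NeZero t]

open Classical in
noncomputable def pickSet (Q : Fin t → Fin t) (n : ℕ) (s : ℕ → Fin t) (k : ℕ) :
    Finset (Fin t) :=
  Finset.univ.filter fun i => ¬ Seen s n k (cand s n k (Q i))

noncomputable def pick (Q : Fin t → Fin t) (n : ℕ) (s : ℕ → Fin t) (k : ℕ) : Fin t :=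
  if h : (pickSet Q n s k).Nonempty then Q ((pickSet Q n s k).min' h) else 0

noncomputable def Fseq (Q : Fin t → Fin t) (n : ℕ) : ℕ → ℕ → Fin t
  | 0 => fun _ => 0
  | m + 1 => fun i => if i = n + m then pick Q n (Fseq Q n m) (n + m) else Fseq Q n m i

noncomputable def gseq (Q : Fin t → Fin t) (n : ℕ) : ℕ → Fin t :=
  fun i => Fseq Q n (i + 1) i

lemma mem_pickSet {Q : Fin t → Fin t} {n k : ℕ} {s : ℕ → Fin t} {i : Fin t} :
    i ∈ pickSet Q n s k ↔ ¬ Seen s n k (cand s n k (Q i)) := by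
  classical
  unfold pickSet
  rw [Finset.mem_filter]
  simp

lemma Fseq_agree (Q : Fin t → Fin t) (n : ℕ) :
    ∀ m m', m ≤ m' → ∀ i, i < n + m → Fseq Q n m' i = Fseq Q n m i := by
  intro m m' h
  induction m' with
  | zero =>
    have : m = 0 := by omega
    subst this
    intro i _
    rfl
  | succ m' ih =>
    rcases Nat.eq_or_lt_of_le h with rfl | h'
    · intro i _
      rfl
    · intro i hi
      have hm : m ≤ m' := by omega
      show Fseq Q n (m' + 1) i = Fseq Q n m i
      have : Fseq Q n (m' + 1) i =
          if i = n + m' then pick Q n (Fseq Q n m') (n + m') else Fseq Q n m' i := rfl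
      rw [this, if_neg (by omega), ih hm i hi]

lemma gseq_eq_Fseq (Q : Fin t → Fin t) (n m i : ℕ) (h : i < n + m) :
    gseq Q n i = Fseq Q n m i := by
  rcases le_total (i + 1) m with h' | h'
  · exact (Fseq_agree Q n (i + 1) m h' i (by omega)).symm
  · exact Fseq_agree Q n m (i + 1) h' i h

lemma gseq_init (Q : Fin t → Fin t) (n i : ℕ) (h : i < n) : gseq Q n i = 0 :=
  gseq_eq_Fseq Q n 0 i (by omega)

lemma cand_congr {n k : ℕ} (hk : n ≤ k) {s s' : ℕ → Fin t}
    (h : ∀ i, i < k → s i = s' i) (c : Fin t) : cand s n k c = cand s' n k c := by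
  funext j
  simp only [cand]
  split
  · rfl
  · next hj => exact h _ (by have := j.isLt; omega)

lemma seen_congr {n k : ℕ} {s s' : ℕ → Fin t} (h : ∀ i, i < k → s i = s' i)
    (w : Fin n → Fin t) : Seen s n k w ↔ Seen s' n k w := by
  unfold Seen wordAt
  constructor <;> rintro ⟨p, hp, hw⟩ <;> refine ⟨p, hp, ?_⟩ <;> rw [← hw] <;> funext j
  · exact (h _ (by have := j.isLt; omega)).symm
  · exact h _ (by have := j.isLt; omega)

lemma pick_congr (Q : Fin t → Fin t) {n k : ℕ} (hk : n ≤ k) {s s' : ℕ → Fin t}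
    (h : ∀ i, i < k → s i = s' i) : pick Q n s k = pick Q n s' k := by
  have hset : pickSet Q n s k = pickSet Q n s' k := by
    ext i
    rw [mem_pickSet, mem_pickSet, cand_congr hk h, seen_congr h]
  unfold pick
  rw [hset]

lemma gseq_step (Q : Fin t → Fin t) (n k : ℕ) (hk : n ≤ k) :
    gseq Q n k = pick Q n (gseq Q n) k := by
  have h1 : gseq Q n k = Fseq Q n (k - n + 1) k := gseq_eq_Fseq Q n (k - n + 1) k (by omega)
  have h2 : Fseq Q n (k - n + 1) k =
      if k = n + (k - n) then pick Q n (Fseq Q n (k - n)) (n + (k - n))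
      else Fseq Q n (k - n) k := rfl
  rw [h1, h2, if_pos (by omega), show n + (k - n) = k by omega]
  exact pick_congr Q hk (fun i hi => (gseq_eq_Fseq Q n (k - n) i (by omega)).symm)

def stuckAt (Q : Fin t → Fin t) (n k : ℕ) : Prop :=
  ∀ c : Fin t, Seen (gseq Q n) n k (cand (gseq Q n) n k c)

lemma gseq_spec {Q : Fin t → Fin t} (hQ : Function.Surjective Q) {n k : ℕ}
    (hk : n ≤ k) (h : ¬ stuckAt Q n k) :
    ∃ i : Fin t, gseq Q n k = Q i ∧
      ¬ Seen (gseq Q n) n k (cand (gseq Q n) n k (Q i)) ∧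
      ∀ j, j < i → Seen (gseq Q n) n k (cand (gseq Q n) n k (Q j)) := by
  have hne : (pickSet Q n (gseq Q n) k).Nonempty := by
    unfold stuckAt at h
    push_neg at h
    obtain ⟨c, hc⟩ := h
    obtain ⟨i, rfl⟩ := hQ c
    exact ⟨i, mem_pickSet.mpr hc⟩
  refine ⟨(pickSet Q n (gseq Q n) k).min' hne, ?_, ?_, ?_⟩
  · rw [gseq_step Q n k hk]
    unfold pick
    rw [dif_pos hne]
  · exact mem_pickSet.mp (Finset.min'_mem _ hne)
  · intro j hj
    by_contra hns
    exact absurd (Finset.min'_le _ j (mem_pickSet.mpr hns)) (not_le.mpr hj)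

lemma window_eq_cand (Q : Fin t → Fin t) {n k : ℕ} (hn : 1 ≤ n) (hk : n ≤ k) :
    wordAt (gseq Q n) n (k - n + 1) = cand (gseq Q n) n k (gseq Q n k) := by
  funext j
  simp only [wordAt, cand]
  split
  · next hj => congr 1; have := j.isLt; omega
  · next hj => congr 1; have := j.isLt; omega

lemma new_window {Q : Fin t → Fin t} (hQ : Function.Surjective Q) {n k : ℕ}
    (hn : 1 ≤ n) (hk : n ≤ k) (h : ¬ stuckAt Q n k) :
    ∀ p, p + n ≤ k → wordAt (gseq Q n) n p ≠ wordAt (gseq Q n) n (k - n + 1) := by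
  obtain ⟨i, hi, hns, -⟩ := gseq_spec hQ hk h
  intro p hp heq
  exact hns ⟨p, hp, by rw [heq, window_eq_cand Q hn hk, hi]⟩

lemma exists_stuck (Q : Fin t → Fin t) (hQ : Function.Surjective Q) (n : ℕ)
    (hn : 1 ≤ n) : ∃ k, n ≤ k ∧ stuckAt Q n k := by
  by_contra h
  push_neg at h
  have hinj : Function.Injective (fun p => wordAt (gseq Q n) n p) := by
    have key : ∀ p q, p < q → wordAt (gseq Q n) n p ≠ wordAt (gseq Q n) n q := by
      intro p q hlt
      have hk : n ≤ q + n - 1 := by omega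
      have h1 := new_window hQ hn hk (h _ hk) p (by omega)
      rwa [show q + n - 1 - n + 1 = q by omega] at h1
    intro p q hpq
    by_contra hne
    rcases Nat.lt_or_ge p q with hlt | hge
    · exact key p q hlt hpq
    · exact key q p (by omega) hpq.symm
  obtain ⟨p, q, hne, heq⟩ :=
    Finite.exists_ne_map_eq_of_infinite (fun p => wordAt (gseq Q n) n p)
  exact hne (hinj heq)

lemma exists_genseq {P : (Fin 0 → Fin t) → Fin t → Fin t} (hP : IsPrefFun t 0 P)
    (n : ℕ) (hn : 1 ≤ n) :
    ∃ a L, GenSeqFrom t 0 n (zeroWord t n) P a L := by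
  classical
  set Q := P (fun j : Fin 0 => j.elim0) with hQdef
  have hQ : Function.Surjective Q := (hP _).2
  have hex := exists_stuck Q hQ n hn
  refine ⟨gseq Q n, Nat.find hex, ?_, ?_, ?_, ?_, ?_⟩
  · exact (Nat.find_spec hex).1
  · intro j
    show gseq Q n (j : ℕ) = zeroWord t n j
    rw [gseq_init Q n (j : ℕ) j.isLt]
    rfl
  · intro p q hp hq heq
    by_contra hne
    have key : ∀ p q, p < q → p + n ≤ Nat.find hex → q + n ≤ Nat.find hex →
        wordAt (gseq Q n) n p ≠ wordAt (gseq Q n) n q := by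
      intro p q hlt hp hq
      have hk : n ≤ q + n - 1 := by omega
      have hkL : q + n - 1 < Nat.find hex := by omega
      have hns : ¬ stuckAt Q n (q + n - 1) := fun hs => Nat.find_min hex hkL ⟨hk, hs⟩
      have h1 := new_window hQ hn hk hns p (by omega)
      rwa [show q + n - 1 - n + 1 = q by omega] at h1
    rcases Nat.lt_or_ge p q with hlt | hge
    · exact key p q hlt hp hq heq
    · exact key q p (by omega) hq hp heq.symm
  · intro k hk1 hk2
    have hns : ¬ stuckAt Q n k := fun hs => Nat.find_min hex hk2 ⟨hk1, hs⟩
    obtain ⟨i, hi, -, hji⟩ := gseq_spec hQ hk1 hns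
    refine ⟨i, ?_, ?_⟩
    · rw [P_const P (wordAt (gseq Q n) 0 (k - 0))]
      exact hi
    · intro j hj
      rw [P_const P (wordAt (gseq Q n) 0 (k - 0))]
      exact hji j hj
  · exact (Nat.find_spec hex).2

end Construction

/-- A preference function of span `0` (a fixed priority listing of the
alphabet used after every symbol) generates a full de Bruijn sequence of every order
`n ≥ 1` from the initial word `0^n` if and only if its least preferred symbol is `0`. -/
theorem statement_13 (t : ℕ) [NeZero t] (ht : 2 ≤ t)
    (P : (Fin 0 → Fin t) → Fin t → Fin t) (hP : IsPrefFun t 0 P) :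
    (∀ n, 1 ≤ n → ∃ (a : ℕ → Fin t) (L : ℕ),
      GenSeqFrom t 0 n (zeroWord t n) P a L ∧ Full t n a L) ↔
    P (fun j => j.elim0) ⟨t - 1, by omega⟩ = 0 := by
  constructor
  · intro H
    obtain ⟨a, L, hG, hF⟩ := H 2 (by omega)
    exact forward hG hP (by omega) hF
  · intro hQt n hn
    obtain ⟨a, L, hG⟩ := exists_genseq hP n hn
    exact ⟨a, L, hG, full_of hG hP hn hQt⟩
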